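/- Let f : [0,∞)×{1,…,n} → ℝ have cadlag coordinates with nonnegative jumps. For points p = (x,n), q = (y,m) with x ≤ y and m < ℓ' ≤ n, the last passage value satisfies the metric composition law: f[p → q] = sup_{z ∈ [x,y]} ( f[p → (z, ℓ')] + f[(z, ℓ'-1) → q] ), where f[(a,i) → (b,j)] = sup over paths of Σ (f_r(t_{r-1}) - f_r(t_r⁻)). -/

import Mathlib

open Filter Set

/-- Left limit with the convention `f(0⁻) = 0`. -/
noncomputable def lml (f : ℝ → ℝ) (z : ℝ) : ℝ := if z ≤ 0 then 0 else Function.leftLim f z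

/-- Cadlag on `[0, ∞)`: right-continuous at every `x ≥ 0`, left limits exist at every `x > 0`. -/
def Cadlag (f : ℝ → ℝ) : Prop :=
  (∀ x : ℝ, 0 ≤ x → ContinuousWithinAt f (Set.Ici x) x) ∧
  (∀ x : ℝ, 0 < x → ∃ l : ℝ, Filter.Tendsto f (nhdsWithin x (Set.Iio x)) (nhds l))

/-- All jumps are nonnegative (with the convention `f(0⁻) = 0`). -/
def NonnegJumps (f : ℝ → ℝ) : Prop := ∀ z : ℝ, 0 ≤ z → lml f z ≤ f z

/-- `S f₁ f₂ x y = sup_{z ∈ [x,y]} (f₂ z - f₁ (z⁻))`. -/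
noncomputable def S (f₁ f₂ : ℝ → ℝ) (x y : ℝ) : ℝ :=
  sSup ((fun z => f₂ z - lml f₁ z) '' Set.Icc x y)

/-- `Sm f₁ f₂ x y = sup_{z ∈ [x,y)} (f₂ z - f₁ (z⁻))`. -/
noncomputable def Sm (f₁ f₂ : ℝ → ℝ) (x y : ℝ) : ℝ :=
  sSup ((fun z => f₂ z - lml f₁ z) '' Set.Ico x y)

/-- Jump times of a path from `(x, a)` (bottom line `a`) to `(y, b)` (top line `b ≤ a`):
`t a = x`, `t (b-1) = y`, and `t` is nonincreasing in the index on `[b-1, a]`. -/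
def IsPathJT (a b : ℕ) (x y : ℝ) (t : ℕ → ℝ) : Prop :=
  t a = x ∧ t (b - 1) = y ∧ ∀ i : ℕ, b - 1 ≤ i → i < a → t (i + 1) ≤ t i

/-- Length of the path with jump times `t`: `∑_{i=b}^{a} (f_i(t_{i-1}) - f_i(t_i⁻))`. -/
noncomputable def pathLen (f : ℕ → ℝ → ℝ) (a b : ℕ) (t : ℕ → ℝ) : ℝ :=
  ∑ i ∈ Finset.Icc b a, (f i (t (i - 1)) - lml (f i) (t i))

/-- Last passage value from `(x, a)` to `(y, b)` across `f`. -/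
noncomputable def LPV (f : ℕ → ℝ → ℝ) (a b : ℕ) (x y : ℝ) : ℝ :=
  sSup {v : ℝ | ∃ t : ℕ → ℝ, IsPathJT a b x y t ∧ v = pathLen f a b t}

/-!
Cutting a path at its jump time `t (l - 1)` from line `l` to line `l - 1` splits its length into
the lengths of the two pieces, and conversely two paths meeting at a point `z` concatenate to a
path whose length is the sum. Hence the set of path lengths from `(x, n)` to `(y, m)` is the union
over `z ∈ [x, y]` of the sumsets of path lengths through `(z, l)` and `(z, l - 1)`, and the law
follows by taking suprema. These sets are bounded above because a cadlag function and its left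
limits are bounded on `[0, y]`, by compactness.
-/

open Bornology
open scoped Pointwise Topology

namespace Cadlag

variable {f : ℝ → ℝ}

lemma exists_mem_nhds_isBounded_image (hf : Cadlag f) {z : ℝ} (hz : 0 ≤ z) :
    ∃ V ∈ 𝓝 z, IsBounded (f '' (V ∩ Ici 0)) := by
  obtain ⟨Vr, hVr, hbr⟩ := Metric.exists_isBounded_image_of_tendsto (hf.1 z hz)
  obtain ⟨Vl, hVl, hbl⟩ : ∃ Vl ∈ 𝓝[<] z, IsBounded (f '' (Vl ∩ Ici 0)) := by
    rcases hz.eq_or_lt with rfl | hz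
    · exact ⟨Iio 0, self_mem_nhdsWithin, by simp [Iio_inter_Ici]⟩
    · obtain ⟨L, hL⟩ := hf.2 z hz
      obtain ⟨Vl, hVl, hbl⟩ := Metric.exists_isBounded_image_of_tendsto hL
      exact ⟨Vl, hVl, hbl.subset (image_mono inter_subset_left)⟩
  refine ⟨Vl ∪ Vr, nhdsLT_sup_nhdsGE z ▸ union_mem_sup hVl hVr, ?_⟩
  refine (hbl.union hbr).subset ?_
  rw [union_inter_distrib_right, image_union]
  exact union_subset_union_right _ (image_mono inter_subset_left)

lemma isBounded_image_Icc (hf : Cadlag f) (y : ℝ) : IsBounded (f '' Icc 0 y) := by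
  have h : IsBounded (f '' (Icc 0 y ∩ Ici 0)) := by
    refine isCompact_Icc.induction_on (p := fun s => IsBounded (f '' (s ∩ Ici 0)))
      (by simp) (fun s t hst ht => ht.subset (image_mono (inter_subset_inter_left _ hst)))
      (fun s t hs ht => ?_) (fun z hz => ?_)
    · rw [union_inter_distrib_right, image_union]
      exact hs.union ht
    · obtain ⟨V, hV, hb⟩ := hf.exists_mem_nhds_isBounded_image hz.1
      exact ⟨V, mem_nhdsWithin_of_mem_nhds hV, hb⟩
  rwa [inter_eq_left.2 Icc_subset_Ici_self] at h

/-- Each left limit `f (w⁻)`, `0 < w ≤ y`, lies in the closure of `f '' [0, y]`. -/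
lemma isBounded_lml_image_Icc (hf : Cadlag f) (y : ℝ) : IsBounded (lml f '' Icc 0 y) := by
  refine ((isBounded_insert (x := 0)).2 (hf.isBounded_image_Icc y).closure).subset ?_
  rintro _ ⟨w, ⟨hw0, hwy⟩, rfl⟩
  rcases hw0.eq_or_lt with rfl | hw0
  · simp [lml]
  obtain ⟨L, hL⟩ := hf.2 w hw0
  rw [lml, if_neg hw0.not_ge, leftLim_eq_of_tendsto hL]
  refine mem_insert_of_mem _ (mem_closure_of_tendsto hL ?_)
  filter_upwards [Ioo_mem_nhdsLT hw0] with v hv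
  exact mem_image_of_mem f ⟨hv.1.le, hv.2.le.trans hwy⟩

end Cadlag

namespace IsPathJT

variable {a b l m n : ℕ} {x y : ℝ} {t : ℕ → ℝ}

lemma le_of_le (ht : IsPathJT a b x y t) {i j : ℕ} (hi : b - 1 ≤ i) (hij : i ≤ j) (hj : j ≤ a) :
    t j ≤ t i := by
  induction j, hij using Nat.le_induction with
  | base => exact le_rfl
  | succ j hij ih => exact (ht.2.2 j (hi.trans hij) hj).trans (ih (by omega))

lemma mem_Icc (ht : IsPathJT a b x y t) {i : ℕ} (hi : b - 1 ≤ i) (hia : i ≤ a) : t i ∈ Icc x y :=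
  ⟨ht.1 ▸ ht.le_of_le hi hia le_rfl, ht.2.1 ▸ ht.le_of_le le_rfl hi hia⟩

lemma lower (ht : IsPathJT n m x y t) (hml : m ≤ l) : IsPathJT n l x (t (l - 1)) t :=
  ⟨ht.1, rfl, fun i hi hin => ht.2.2 i (by omega) hin⟩

lemma upper (ht : IsPathJT n m x y t) (hln : l ≤ n) : IsPathJT (l - 1) m (t (l - 1)) y t :=
  ⟨rfl, ht.2.1, fun i hi hil => ht.2.2 i hi (by omega)⟩

end IsPathJT

lemma isPathJT_along_bottom {a b : ℕ} (hb : 1 ≤ b) (hba : b ≤ a) {x y : ℝ} (hxy : x ≤ y) :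
    IsPathJT a b x y (fun i => if i = a then x else y) := by
  refine ⟨if_pos rfl, if_neg (by omega), fun i _ hia => ?_⟩
  simp only [if_neg hia.ne]
  split_ifs <;> simp [hxy]

/-- The path that follows `t₁` on lines `n, …, l` and then `t₂` on lines `l - 1, …, m`. -/
def pathConcat (l : ℕ) (t₁ t₂ : ℕ → ℝ) : ℕ → ℝ := fun i => if i < l - 1 then t₂ i else t₁ i

lemma IsPathJT.concat {l m n : ℕ} {x y z : ℝ} {t₁ t₂ : ℕ → ℝ} (hm : 1 ≤ m) (hml : m < l)
    (hln : l ≤ n) (h₁ : IsPathJT n l x z t₁) (h₂ : IsPathJT (l - 1) m z y t₂) :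
    IsPathJT n m x y (pathConcat l t₁ t₂) := by
  refine ⟨by simpa [pathConcat, show ¬ n < l - 1 by omega] using h₁.1,
    by simpa [pathConcat, show m - 1 < l - 1 by omega] using h₂.2.1, fun i hi hin => ?_⟩
  simp only [pathConcat]
  split_ifs with hi₁ hi₂ hi₂
  · exact h₂.2.2 i hi (by omega)
  · omega
  · -- `i + 1 = l - 1`, where both paths pass through `z`
    have hz : t₁ (i + 1) = t₂ (i + 1) := by rw [show i + 1 = l - 1 by omega, h₁.2.1, h₂.1]
    exact hz ▸ h₂.2.2 i hi hi₂
  · exact h₁.2.2 i (by omega) hin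

lemma pathLen_congr (f : ℕ → ℝ → ℝ) {a b : ℕ} {t t' : ℕ → ℝ}
    (h : ∀ i, b - 1 ≤ i → i ≤ a → t i = t' i) : pathLen f a b t = pathLen f a b t' :=
  Finset.sum_congr rfl fun i hi => by
    obtain ⟨hbi, hia⟩ := Finset.mem_Icc.1 hi
    rw [h (i - 1) (by omega) (by omega), h i (by omega) hia]

lemma pathLen_eq_add (f : ℕ → ℝ → ℝ) {l m n : ℕ} (hml : m < l) (hln : l ≤ n) (t : ℕ → ℝ) :
    pathLen f n m t = pathLen f n l t + pathLen f (l - 1) m t := by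
  have hsplit : Finset.Icc m n = Finset.Icc l n ∪ Finset.Icc m (l - 1) := by
    ext i; simp only [Finset.mem_Icc, Finset.mem_union]; omega
  have hdisj : Disjoint (Finset.Icc l n) (Finset.Icc m (l - 1)) :=
    Finset.disjoint_left.2 fun i hi hi' => by simp only [Finset.mem_Icc] at hi hi'; omega
  rw [pathLen, hsplit, Finset.sum_union hdisj]
  rfl

def pathLens (f : ℕ → ℝ → ℝ) (a b : ℕ) (x y : ℝ) : Set ℝ :=
  {v : ℝ | ∃ t : ℕ → ℝ, IsPathJT a b x y t ∧ v = pathLen f a b t}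

lemma LPV_eq_sSup_pathLens (f : ℕ → ℝ → ℝ) (a b : ℕ) (x y : ℝ) :
    LPV f a b x y = sSup (pathLens f a b x y) := rfl

section pathLens

variable (f : ℕ → ℝ → ℝ) {a b l m n : ℕ} {x y z : ℝ}

lemma pathLens_nonempty (hb : 1 ≤ b) (hba : b ≤ a) (hxy : x ≤ y) :
    (pathLens f a b x y).Nonempty :=
  ⟨_, _, isPathJT_along_bottom hb hba hxy, rfl⟩

lemma bddAbove_pathLens (hf : ∀ i, b ≤ i → i ≤ a → Cadlag (f i)) (hx : 0 ≤ x) :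
    BddAbove (pathLens f a b x y) := by
  refine ⟨∑ i ∈ Finset.Icc b a, (sSup (f i '' Icc 0 y) - sInf (lml (f i) '' Icc 0 y)), ?_⟩
  rintro _ ⟨t, ht, rfl⟩
  refine Finset.sum_le_sum fun i hi => ?_
  obtain ⟨hbi, hia⟩ := Finset.mem_Icc.1 hi
  have hIcc : ∀ j, b - 1 ≤ j → j ≤ a → t j ∈ Icc 0 y := fun j hj hja =>
    Icc_subset_Icc_left hx (ht.mem_Icc hj hja)
  have h₁ := le_csSup (Cadlag.isBounded_image_Icc (hf i hbi hia) y).bddAbove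
    (mem_image_of_mem (f i) (hIcc (i - 1) (by omega) (by omega)))
  have h₂ := csInf_le (Cadlag.isBounded_lml_image_Icc (hf i hbi hia) y).bddBelow
    (mem_image_of_mem (lml (f i)) (hIcc i (by omega) hia))
  linarith

lemma add_pathLens_subset (hm : 1 ≤ m) (hml : m < l) (hln : l ≤ n) :
    pathLens f n l x z + pathLens f (l - 1) m z y ⊆ pathLens f n m x y := by
  rintro _ ⟨_, ⟨t₁, h₁, rfl⟩, _, ⟨t₂, h₂, rfl⟩, rfl⟩
  refine ⟨pathConcat l t₁ t₂, h₁.concat hm hml hln h₂, ?_⟩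
  rw [pathLen_eq_add f hml hln]
  congr 1
  · exact pathLen_congr f fun i hi _ => (if_neg (not_lt.2 hi)).symm
  · refine pathLen_congr f fun i _ hil => ?_
    rcases hil.lt_or_eq with hil | rfl
    · exact (if_pos hil).symm
    · rw [pathConcat, if_neg (lt_irrefl _), h₁.2.1, h₂.1]

lemma exists_mem_add_of_mem_pathLens (hml : m < l) (hln : l ≤ n) {v : ℝ}
    (hv : v ∈ pathLens f n m x y) :
    ∃ z ∈ Icc x y, v ∈ pathLens f n l x z + pathLens f (l - 1) m z y := by
  obtain ⟨t, ht, rfl⟩ := hv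
  exact ⟨t (l - 1), ht.mem_Icc (by omega) (by omega),
    pathLen f n l t, ⟨t, ht.lower hml.le, rfl⟩, pathLen f (l - 1) m t, ⟨t, ht.upper hln, rfl⟩,
    (pathLen_eq_add f hml hln t).symm⟩

end pathLens

theorem stmt16_general (n m l : ℕ) (hm : 1 ≤ m) (hml : m < l) (hln : l ≤ n)
    (f : ℕ → ℝ → ℝ)
    (hcad : ∀ i : ℕ, 1 ≤ i → i ≤ n → Cadlag (f i))
    (x y : ℝ) (hx : 0 ≤ x) (hxy : x ≤ y) :
    LPV f n m x y
      = sSup ((fun z => LPV f n l x z + LPV f (l - 1) m z y) '' Set.Icc x y) := by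
  have hbdd : ∀ a b x' y', 1 ≤ b → a ≤ n → 0 ≤ x' → BddAbove (pathLens f a b x' y') :=
    fun a b x' y' hb han hx' =>
      bddAbove_pathLens f (fun i hbi hia => hcad i (hb.trans hbi) (hia.trans han)) hx'
  have hpieces : ∀ z ∈ Icc x y, LPV f n l x z + LPV f (l - 1) m z y ≤ LPV f n m x y := by
    intro z hz
    have hne₁ : (pathLens f n l x z).Nonempty := pathLens_nonempty f (by omega) hln hz.1
    have hne₂ : (pathLens f (l - 1) m z y).Nonempty := pathLens_nonempty f hm (by omega) hz.2
    simp only [LPV_eq_sSup_pathLens]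
    rw [← csSup_add hne₁ (hbdd _ _ _ _ (by omega) le_rfl hx) hne₂
      (hbdd _ _ _ _ hm (by omega) (hx.trans hz.1))]
    exact csSup_le_csSup (hbdd _ _ _ _ hm le_rfl hx) (hne₁.add hne₂)
      (add_pathLens_subset f hm hml hln)
  have hbddRHS : BddAbove ((fun z => LPV f n l x z + LPV f (l - 1) m z y) '' Icc x y) :=
    ⟨_, forall_mem_image.2 hpieces⟩
  refine le_antisymm (csSup_le (pathLens_nonempty f hm (by omega) hxy) fun v hv => ?_)
    (csSup_le ((nonempty_Icc.2 hxy).image _) (forall_mem_image.2 hpieces))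
  obtain ⟨z, hz, _, hv₁, _, hv₂, rfl⟩ := exists_mem_add_of_mem_pathLens f hml hln hv
  calc _ ≤ LPV f n l x z + LPV f (l - 1) m z y :=
        add_le_add (le_csSup (hbdd _ _ _ _ (by omega) le_rfl hx) hv₁)
          (le_csSup (hbdd _ _ _ _ hm (by omega) (hx.trans hz.1)) hv₂)
    _ ≤ _ := le_csSup hbddRHS (mem_image_of_mem _ hz)

theorem stmt16 (n m l : ℕ) (hm : 1 ≤ m) (hml : m < l) (hln : l ≤ n)
    (f : ℕ → ℝ → ℝ)
    (hcad : ∀ i : ℕ, 1 ≤ i → i ≤ n → Cadlag (f i))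
    (hjmp : ∀ i : ℕ, 1 ≤ i → i ≤ n → NonnegJumps (f i))
    (x y : ℝ) (hx : 0 ≤ x) (hxy : x ≤ y) :
    LPV f n m x y
      = sSup ((fun z => LPV f n l x z + LPV f (l - 1) m z y) '' Set.Icc x y) :=
  stmt16_general n m l hm hml hln f hcad x y hx hxy
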